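/- Let F preserve colimits of λ-chains on a cocomplete category C, with free-algebra construction stopping at λ, and set υ = colim_{n<λ} q_n : F F_λ → F_λ. Then for every object A, the algebra (F_λ A, υ_A) together with the unit ι_{λ,A} : A → F_λ A is a free F-algebra on A: for every F-algebra (B, β) and every morphism f : A → B there is a unique F-algebra morphism g : (F_λ A, υ_A) → (B, β) with g ∘ ι_{λ,A} = f. -/

import Mathlib

open CategoryTheory CategoryTheory.Limits

universe v u

/-- The free-algebra (term functor) construction for an endofunctor `F` on a cocomplete
category: term functors `Fo n` for each ordinal `n`, connecting natural transformations
`w`, coproduct injections `q n : F ∘ Fₙ ⟶ F_{n+1}` and `ι n : Id ⟶ Fₙ`, where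
`F₀ = Id` (up to iso, witnessed by `ι 0` being invertible), `F_{n+1} = F Fₙ + Id`
(witnessed by the binary-coproduct universal property), and `Fₗ = colim_{m<l} F_m` at
limit ordinals (witnessed by the hand-rolled colimit universal property). -/
structure TermConstruction {C : Type u} [Category.{v} C] (F : C ⥤ C) where
  Fo : Ordinal.{v} → C ⥤ C
  w : ∀ {m n : Ordinal.{v}}, m ≤ n → (Fo m ⟶ Fo n)
  q : ∀ n : Ordinal.{v}, Fo n ⋙ F ⟶ Fo (n + 1)
  ι : ∀ n : Ordinal.{v}, 𝟭 C ⟶ Fo n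
  iso0 : IsIso (ι 0)
  w_refl : ∀ n : Ordinal.{v}, w (le_refl n) = 𝟙 (Fo n)
  w_trans : ∀ {m n p : Ordinal.{v}} (h₁ : m ≤ n) (h₂ : n ≤ p), w h₁ ≫ w h₂ = w (h₁.trans h₂)
  ι_w : ∀ {m n : Ordinal.{v}} (h : m ≤ n), ι m ≫ w h = ι n
  q_w : ∀ {m n : Ordinal.{v}} (h : m ≤ n),
      Functor.whiskerRight (w h) F ≫ q n = q m ≫ w (add_le_add_left h 1)
  succ_isColimit : ∀ (n : Ordinal.{v}) (A : C),
      Nonempty (IsColimit (BinaryCofan.mk ((q n).app A) ((ι (n + 1)).app A)))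
  limit_exists_unique : ∀ (n : Ordinal.{v}), Order.IsSuccLimit n → ∀ (A X : C)
      (g : ∀ m : Ordinal.{v}, m < n → ((Fo m).obj A ⟶ X)),
      (∀ (m m' : Ordinal.{v}) (h : m ≤ m') (h' : m' < n),
        (w h).app A ≫ g m' h' = g m (lt_of_le_of_lt h h')) →
      ∃! k : (Fo n).obj A ⟶ X,
        ∀ (m : Ordinal.{v}) (h : m < n), (w h.le).app A ≫ k = g m h

/-- The term-evaluations `ε n : Fₙ A ⟶ A` of an `F`-algebra `(A, α)`, defined recursively by
`ε 0 = id` (transported along `ι 0`), `ε (n+1) = [α ∘ F (ε n), id]` and colimits at limit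
ordinals. -/
structure TermEval {C : Type u} [Category.{v} C] (F : C ⥤ C) (T : TermConstruction F)
    (A : C) (α : F.obj A ⟶ A) where
  ε : ∀ n : Ordinal.{v}, (T.Fo n).obj A ⟶ A
  ε_zero : (T.ι 0).app A ≫ ε 0 = 𝟙 A
  ε_succ_q : ∀ n : Ordinal.{v}, (T.q n).app A ≫ ε (n + 1) = F.map (ε n) ≫ α
  ε_succ_ι : ∀ n : Ordinal.{v}, (T.ι (n + 1)).app A ≫ ε (n + 1) = 𝟙 A
  ε_limit : ∀ (n : Ordinal.{v}), Order.IsSuccLimit n →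
      ∀ (m : Ordinal.{v}) (h : m < n), (T.w h.le).app A ≫ ε n = ε m

/-!
Call `k : Fₙ A ⟶ B` a truncated algebra morphism if `k ∘ ιₙ = f` and `k` satisfies the algebra
equation on the image of every `qₘ`, `m < n`. Since the injections `ιₙ` and `qₘ ⟶ Fₙ` are jointly
epimorphic, truncated algebra morphisms are unique, by induction on `n`; they exist by transfinite
recursion, through the coproduct `F_{p+1} = F F_p + Id` at successors and the colimit at limits.
At `n = λ`, since `F` preserves the colimit `F_λ = colim_{m<λ} F_m`, so that
`F F_λ = colim_{m<λ} F F_m`, the truncated algebra morphisms are exactly the algebra morphisms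
`(F_λ A, υ_A) ⟶ (B, β)` extending `f`.
-/

namespace TermConstruction

variable {C : Type u} [Category.{v} C] {F : C ⥤ C} (T : TermConstruction F) {A : C}

lemma w_app_w_app {m n p : Ordinal.{v}} (h₁ : m ≤ n) (h₂ : n ≤ p) :
    (T.w h₁).app A ≫ (T.w h₂).app A = (T.w (h₁.trans h₂)).app A := by
  rw [← NatTrans.comp_app, T.w_trans]

lemma w_app_w_app_assoc {m n p : Ordinal.{v}} (h₁ : m ≤ n) (h₂ : n ≤ p) {X : C}
    (x : (T.Fo p).obj A ⟶ X) :
    (T.w h₁).app A ≫ (T.w h₂).app A ≫ x = (T.w (h₁.trans h₂)).app A ≫ x := by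
  rw [← Category.assoc, w_app_w_app]

lemma ι_app_w_app {m n : Ordinal.{v}} (h : m ≤ n) :
    (T.ι m).app A ≫ (T.w h).app A = (T.ι n).app A := by
  rw [← NatTrans.comp_app, T.ι_w]

lemma ι_app_w_app_assoc {m n : Ordinal.{v}} (h : m ≤ n) {X : C} (x : (T.Fo n).obj A ⟶ X) :
    (T.ι m).app A ≫ (T.w h).app A ≫ x = (T.ι n).app A ≫ x := by
  rw [← Category.assoc, ι_app_w_app]

lemma q_app_w_app_assoc {m n : Ordinal.{v}} (h : m ≤ n) (h' : m + 1 ≤ n + 1) {X : C}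
    (x : (T.Fo (n + 1)).obj A ⟶ X) :
    (T.q m).app A ≫ (T.w h').app A ≫ x = F.map ((T.w h).app A) ≫ (T.q n).app A ≫ x := by
  have e := congrArg (fun t => NatTrans.app t A) (T.q_w h)
  simp only [NatTrans.comp_app, Functor.whiskerRight_app] at e
  rw [← Category.assoc, ← e, Category.assoc]

lemma hom_ext_of_isSuccLimit {n : Ordinal.{v}} (hn : Order.IsSuccLimit n) {X : C}
    {x y : (T.Fo n).obj A ⟶ X}
    (h : ∀ m (hm : m < n), (T.w hm.le).app A ≫ x = (T.w hm.le).app A ≫ y) : x = y :=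
  (T.limit_exists_unique n hn A X (fun _ hm => (T.w hm.le).app A ≫ y)
    (fun _ _ _ _ => T.w_app_w_app_assoc _ _ y)).unique h (fun _ _ => rfl)

theorem hom_ext {n : Ordinal.{v}} {X : C} {x y : (T.Fo n).obj A ⟶ X}
    (hι : (T.ι n).app A ≫ x = (T.ι n).app A ≫ y)
    (hq : ∀ m (h : m + 1 ≤ n),
      (T.q m).app A ≫ (T.w h).app A ≫ x = (T.q m).app A ≫ (T.w h).app A ≫ y) :
    x = y := by
  induction n using Ordinal.limitRecOn with
  | zero =>
    have := T.iso0
    exact (cancel_epi _).1 hι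
  | add_one p _ =>
    obtain ⟨hc⟩ := T.succ_isColimit p A
    refine BinaryCofan.IsColimit.hom_ext hc ?_ hι
    have hp := hq p le_rfl
    rwa [T.w_refl, NatTrans.id_app, Category.id_comp, Category.id_comp] at hp
  | limit n hn IH =>
    refine T.hom_ext_of_isSuccLimit hn fun m hm => IH m hm ?_ fun s hs => ?_
    · rw [ι_app_w_app_assoc, ι_app_w_app_assoc, hι]
    · rw [w_app_w_app_assoc, w_app_w_app_assoc, hq]

variable {B : C} (β : F.obj B ⟶ B) (f : A ⟶ B)

structure IsTruncatedAlgHom (n : Ordinal.{v}) (k : (T.Fo n).obj A ⟶ B) : Prop where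
  ι_comp : (T.ι n).app A ≫ k = f
  q_comp : ∀ m (h : m + 1 ≤ n),
    (T.q m).app A ≫ (T.w h).app A ≫ k = F.map ((T.w (le_self_add.trans h)).app A ≫ k) ≫ β

variable {T β f}

lemma IsTruncatedAlgHom.restrict {n : Ordinal.{v}} {k : (T.Fo n).obj A ⟶ B}
    (hk : T.IsTruncatedAlgHom β f n k) {m : Ordinal.{v}} (h : m ≤ n) :
    T.IsTruncatedAlgHom β f m ((T.w h).app A ≫ k) where
  ι_comp := by rw [ι_app_w_app_assoc, hk.ι_comp]
  q_comp s hs := by rw [w_app_w_app_assoc, w_app_w_app_assoc, hk.q_comp]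

theorem IsTruncatedAlgHom.eq {n : Ordinal.{v}} {k k' : (T.Fo n).obj A ⟶ B}
    (hk : T.IsTruncatedAlgHom β f n k) (hk' : T.IsTruncatedAlgHom β f n k') : k = k' := by
  induction n using WellFoundedLT.induction with
  | _ n IH =>
    refine T.hom_ext (hk.ι_comp.trans hk'.ι_comp.symm) fun m h => ?_
    have hm : m < n := Order.add_one_le_iff.mp h
    rw [hk.q_comp, hk'.q_comp, IH m hm (hk.restrict _) (hk'.restrict _)]

lemma IsTruncatedAlgHom.of_isSuccLimit {n : Ordinal.{v}} (hn : Order.IsSuccLimit n)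
    {k : (T.Fo n).obj A ⟶ B}
    (hk : ∀ m (hm : m < n), T.IsTruncatedAlgHom β f m ((T.w hm.le).app A ≫ k)) :
    T.IsTruncatedAlgHom β f n k where
  ι_comp := by
    rw [← T.ι_app_w_app_assoc hn.pos.le]
    exact (hk 0 hn.pos).ι_comp
  q_comp m h := by
    have hm1 : m + 1 < n := hn.add_one_lt (Order.add_one_le_iff.mp h)
    have := (hk (m + 1) hm1).q_comp m le_rfl
    rwa [T.w_refl, NatTrans.id_app, Category.id_comp, w_app_w_app_assoc] at this

lemma IsTruncatedAlgHom.exists_add_one {p : Ordinal.{v}} {kp : (T.Fo p).obj A ⟶ B}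
    (hkp : T.IsTruncatedAlgHom β f p kp) : ∃ k, T.IsTruncatedAlgHom β f (p + 1) k := by
  obtain ⟨hc⟩ := T.succ_isColimit p A
  let k : (T.Fo (p + 1)).obj A ⟶ B := hc.desc (BinaryCofan.mk (F.map kp ≫ β) f)
  have hq : (T.q p).app A ≫ k = F.map kp ≫ β := hc.fac _ ⟨WalkingPair.left⟩
  have hι : (T.ι (p + 1)).app A ≫ k = f := hc.fac _ ⟨WalkingPair.right⟩
  have hqw : ∀ m (h : m ≤ p) (h' : m + 1 ≤ p + 1),
      (T.q m).app A ≫ (T.w h').app A ≫ k = F.map ((T.w h).app A ≫ kp) ≫ β := by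
    intro m h h'
    rw [q_app_w_app_assoc T h, hq, F.map_comp, Category.assoc]
  have hres : (T.w le_self_add).app A ≫ k = kp := by
    refine T.hom_ext (by rw [ι_app_w_app_assoc, hι, hkp.ι_comp]) fun s hs => ?_
    rw [w_app_w_app_assoc, hqw s (le_self_add.trans hs), hkp.q_comp]
  refine ⟨k, hι, fun m h => ?_⟩
  have hm : m ≤ p := Order.le_of_succ_le_succ h
  rw [hqw m hm, ← hres, w_app_w_app_assoc]

variable (T β f)

theorem exists_isTruncatedAlgHom (n : Ordinal.{v}) : ∃ k, T.IsTruncatedAlgHom β f n k := by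
  induction n using Ordinal.limitRecOn with
  | zero =>
    have := T.iso0
    exact ⟨inv ((T.ι 0).app A) ≫ f, by simp, fun m h => by simp at h⟩
  | add_one p IH =>
    obtain ⟨kp, hkp⟩ := IH
    exact hkp.exists_add_one
  | limit n hn IH =>
    choose k hk using IH
    obtain ⟨kn, hkn, -⟩ := T.limit_exists_unique n hn A B k
      fun m m' h h' => ((hk m' h').restrict h).eq (hk m _)
    exact ⟨kn, .of_isSuccLimit hn fun m hm => by rw [hkn]; exact hk m hm⟩

variable (A)

def chain (l : Ordinal.{v}) : {m : Ordinal.{v} // m < l} ⥤ C where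
  obj m := (T.Fo m.1).obj A
  map h := (T.w (leOfHom h)).app A
  map_id m := by simp only [T.w_refl]; rfl
  map_comp _ _ := (T.w_app_w_app _ _).symm

def chainCocone (l : Ordinal.{v}) : Cocone (T.chain A l) where
  pt := (T.Fo l).obj A
  ι.app m := (T.w m.2.le).app A
  ι.naturality _ _ _ := (T.w_app_w_app _ _).trans (Category.comp_id _).symm

noncomputable def isColimitChainCocone {l : Ordinal.{v}} (hl : Order.IsSuccLimit l) :
    IsColimit (T.chainCocone A l) := by
  choose desc fac uniq using fun s : Cocone (T.chain A l) =>
    T.limit_exists_unique l hl A s.pt (fun m hm => s.ι.app ⟨m, hm⟩)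
      fun _ _ h _ => s.w (homOfLE (Subtype.mk_le_mk.mpr h))
  exact { desc, fac s m := fac s m.1 m.2, uniq s k hk := uniq s k fun m hm => hk ⟨m, hm⟩ }

/-- `υ` is the structure map `colim_{n<l} qₙ` on `F_l A`. -/
def IsColimQ {l : Ordinal.{v}} (υ : F.obj ((T.Fo l).obj A) ⟶ (T.Fo l).obj A) : Prop :=
  ∀ n (hn : n < l),
    F.map ((T.w hn.le).app A) ≫ υ = (T.q n).app A ≫ (T.w (Order.add_one_le_of_lt hn)).app A

variable {T A β f} {l : Ordinal.{v}} {υ : F.obj ((T.Fo l).obj A) ⟶ (T.Fo l).obj A}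

lemma IsColimQ.isTruncatedAlgHom (hυ : T.IsColimQ A υ) {k : (T.Fo l).obj A ⟶ B}
    (hk : υ ≫ k = F.map k ≫ β) (hι : (T.ι l).app A ≫ k = f) : T.IsTruncatedAlgHom β f l k where
  ι_comp := hι
  q_comp m h := by
    rw [← Category.assoc, ← hυ m (Order.add_one_le_iff.mp h), Category.assoc, hk,
      ← F.map_comp_assoc]

lemma IsTruncatedAlgHom.comp_eq_map_comp (hυ : T.IsColimQ A υ) (hl : Order.IsSuccLimit l)
    [PreservesColimitsOfShape {m : Ordinal.{v} // m < l} F] {k : (T.Fo l).obj A ⟶ B}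
    (hk : T.IsTruncatedAlgHom β f l k) : υ ≫ k = F.map k ≫ β :=
  (isColimitOfPreserves F (T.isColimitChainCocone A hl)).hom_ext fun ⟨m, hm⟩ => by
    change F.map ((T.w hm.le).app A) ≫ υ ≫ k = F.map ((T.w hm.le).app A) ≫ F.map k ≫ β
    rw [← Category.assoc, hυ m hm, Category.assoc, hk.q_comp, F.map_comp, Category.assoc]

end TermConstruction

theorem free_algebra_in_AlgF_general {C : Type u} [Category.{v} C] (F : C ⥤ C)
    (T : TermConstruction F) (l : Ordinal.{v}) (hl : Order.IsSuccLimit l)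
    [PreservesColimitsOfShape {m : Ordinal.{v} // m < l} F]
    (υ : T.Fo l ⋙ F ⟶ T.Fo l)
    (hυ : ∀ (n : Ordinal.{v}) (hn : n < l) (hn1 : n + 1 ≤ l) (A : C),
      F.map ((T.w hn.le).app A) ≫ υ.app A = (T.q n).app A ≫ (T.w hn1).app A)
    (A : C) :
    ∀ (B : C) (β : F.obj B ⟶ B) (f : A ⟶ B),
      ∃! g : (T.Fo l).obj A ⟶ B,
        υ.app A ≫ g = F.map g ≫ β ∧ (T.ι l).app A ≫ g = f := by
  intro B β f
  have hυA : T.IsColimQ A (υ.app A) := fun n hn => hυ n hn _ A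
  obtain ⟨g, hg⟩ := T.exists_isTruncatedAlgHom β f l
  refine ⟨g, ⟨hg.comp_eq_map_comp hυA hl, hg.ι_comp⟩, fun g' ⟨hυg', hιg'⟩ => ?_⟩
  exact (hυA.isTruncatedAlgHom hυg' hιg').eq hg

/-- Let `F` preserve colimits of `λ`-chains, so that the free-algebra construction stops at
`λ`, and let `υ = colim_{n<λ} qₙ : F F_λ ⟶ F_λ` (characterized componentwise by
`υ ∘ F w_{n,λ} = w_{n+1,λ} ∘ qₙ` for all `n < λ`).  Then for every object `A`, the algebra
`(F_λ A, υ_A)` with unit `ι_{λ,A} : A ⟶ F_λ A` is a free `F`-algebra on `A`: for every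
`F`-algebra `(B, β)` and every `f : A ⟶ B` there is a unique `F`-algebra morphism
`g : (F_λ A, υ_A) ⟶ (B, β)` with `g ∘ ι_{λ,A} = f`. -/
theorem free_algebra_in_AlgF {C : Type u} [Category.{v} C] [HasColimits C] (F : C ⥤ C)
    (T : TermConstruction F) (l : Ordinal.{v}) (hl : Order.IsSuccLimit l)
    [PreservesColimitsOfShape {m : Ordinal.{v} // m < l} F]
    (υ : T.Fo l ⋙ F ⟶ T.Fo l)
    (hυ : ∀ (n : Ordinal.{v}) (hn : n < l) (hn1 : n + 1 ≤ l) (A : C),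
      F.map ((T.w hn.le).app A) ≫ υ.app A = (T.q n).app A ≫ (T.w hn1).app A)
    (A : C) :
    ∀ (B : C) (β : F.obj B ⟶ B) (f : A ⟶ B),
      ∃! g : (T.Fo l).obj A ⟶ B,
        υ.app A ≫ g = F.map g ≫ β ∧ (T.ι l).app A ≫ g = f :=
  free_algebra_in_AlgF_general F T l hl υ hυ A
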